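/- arXiv:2208.05944 — 2 statements merged into one kernel-verified Lean document; each statement's English description precedes it below -/
import Mathlib

section
/- Let (Ω, 𝓕, ℙ) be a probability space with a filtration (𝓕_k)_{k ∈ ℕ}, and let (B_k)_{k ∈ ℕ} be a sequence of integrable real-valued random variables adapted to (𝓕_k) with B_k ≥ 0 almost surely for all k. Suppose there is a constant c ≥ 0 such that for every k, the conditional expectation satisfies 𝔼[B_{k+1} | 𝓕_k] ≤ B_k + c almost surely, and suppose B_0 ≤ γ almost surely for some constant γ ∈ [0, 1). Then for every T ∈ ℕ, ℙ( there exists k with 0 ≤ k < T such that B_k ≥ 1 ) ≤ γ + c·T. -/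
/-!
Removing the drift, `B k - c * k` is a supermartingale. Stop it at the first time `τ ≤ T` at which
`B` reaches `[1, ∞)`: optional stopping gives `𝔼[B_τ] ≤ 𝔼[B_0] + c * T ≤ γ + c * T`, and on the
exit event `B_τ ≥ 1`, so Markov's inequality for the nonnegative `B_τ` bounds its probability.
-/

open MeasureTheory

namespace MeasureTheory

variable {Ω : Type*} {m0 : MeasurableSpace Ω} {μ : Measure Ω} {𝓕 : Filtration ℕ m0}

theorem supermartingale_sub_mul_of_condExp_le_add [IsFiniteMeasure μ] {B : ℕ → Ω → ℝ} {c : ℝ}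
    (hadp : StronglyAdapted 𝓕 B) (hint : ∀ k, Integrable (B k) μ)
    (hB : ∀ k, μ[B (k + 1) | 𝓕 k] ≤ᵐ[μ] fun ω => B k ω + c) :
    Supermartingale (fun k ω => B k ω - c * k) 𝓕 μ := by
  refine supermartingale_nat (fun k => (hadp k).sub stronglyMeasurable_const)
    (fun k => (hint k).sub (integrable_const _)) fun k => ?_
  have hsub : μ[fun ω => B (k + 1) ω - c * ↑(k + 1) | 𝓕 k]
      =ᵐ[μ] μ[B (k + 1) | 𝓕 k] - fun _ => c * ↑(k + 1) := by
    rw [← condExp_const (μ := μ) (𝓕.le k) (c * ↑(k + 1) : ℝ)]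
    exact condExp_sub (hint (k + 1)) (integrable_const _) _
  filter_upwards [hsub, hB k] with ω hω hBω
  rw [hω, Pi.sub_apply]
  push_cast
  linarith

theorem Supermartingale.integral_stoppedValue_le [SigmaFiniteFiltration μ 𝓕] {f : ℕ → Ω → ℝ}
    (hf : Supermartingale f 𝓕 μ) {τ : Ω → ℕ∞} (hτ : IsStoppingTime 𝓕 τ) {N : ℕ}
    (hbdd : ∀ ω, τ ω ≤ N) : ∫ ω, stoppedValue f τ ω ∂μ ≤ ∫ ω, f 0 ω ∂μ := by
  have h := hf.neg.expected_stoppedValue_mono (isStoppingTime_const 𝓕 0) hτ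
    (fun _ => zero_le) hbdd
  simp only [stoppedValue, Pi.neg_apply, integral_neg, neg_le_neg_iff] at h
  exact h

theorem integral_stoppedValue_le_of_condExp_le_add [IsProbabilityMeasure μ] {B : ℕ → Ω → ℝ}
    {c : ℝ} (hadp : StronglyAdapted 𝓕 B) (hint : ∀ k, Integrable (B k) μ) (hc : 0 ≤ c)
    (hB : ∀ k, μ[B (k + 1) | 𝓕 k] ≤ᵐ[μ] fun ω => B k ω + c)
    {τ : Ω → ℕ∞} (hτ : IsStoppingTime 𝓕 τ) {N : ℕ} (hbdd : ∀ ω, τ ω ≤ N) :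
    ∫ ω, stoppedValue B τ ω ∂μ ≤ ∫ ω, B 0 ω ∂μ + c * N := by
  set X : ℕ → Ω → ℝ := fun k ω => B k ω - c * k
  have hX : Supermartingale X 𝓕 μ := supermartingale_sub_mul_of_condExp_le_add hadp hint hB
  have hXτ : Integrable (stoppedValue X τ) μ := integrable_stoppedValue ℕ hτ hX.integrable hbdd
  have hle : stoppedValue B τ ≤ fun ω => stoppedValue X τ ω + c * N := fun ω => by
    have hτN : ((τ ω).untopA : ℝ) ≤ N := mod_cast WithTop.untopA_le (hbdd ω)
    have := mul_le_mul_of_nonneg_left hτN hc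
    simp only [stoppedValue, X]
    linarith
  calc ∫ ω, stoppedValue B τ ω ∂μ ≤ ∫ ω, stoppedValue X τ ω + c * N ∂μ :=
        integral_mono (integrable_stoppedValue ℕ hτ hint hbdd) (hXτ.add (integrable_const _)) hle
    _ = ∫ ω, stoppedValue X τ ω ∂μ + c * N := by
        rw [integral_add hXτ (integrable_const _)]
        simp
    _ ≤ ∫ ω, B 0 ω ∂μ + c * N := by
        grw [hX.integral_stoppedValue_le hτ hbdd]
        simp [X]

end MeasureTheory

theorem cMartingale_exit_prob_le_general {Ω : Type*} {m0 : MeasurableSpace Ω}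
    (μ : Measure Ω) [IsProbabilityMeasure μ]
    (𝓕 : Filtration ℕ m0) (B : ℕ → Ω → ℝ)
    (hAdapted : Adapted 𝓕 B)
    (hInt : ∀ k, Integrable (B k) μ)
    (hNonneg : ∀ k, ∀ᵐ ω ∂μ, 0 ≤ B k ω)
    (c : ℝ) (hc : 0 ≤ c)
    (hMart : ∀ k, μ[B (k + 1) | 𝓕 k] ≤ᵐ[μ] fun ω => B k ω + c)
    (γ : ℝ)
    (hB0 : ∀ᵐ ω ∂μ, B 0 ω ≤ γ)
    (T : ℕ) :
    μ {ω | ∃ k, k < T ∧ 1 ≤ B k ω} ≤ ENNReal.ofReal (γ + c * T) := by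
  set τ : Ω → ℕ∞ := fun ω => (hittingBtwn B (Set.Ici 1) 0 T ω : ℕ)
  have hτ : IsStoppingTime 𝓕 τ := hAdapted.isStoppingTime_hittingBtwn measurableSet_Ici
  have hτT : ∀ ω, τ ω ≤ T := fun ω => Nat.cast_le.mpr (hittingBtwn_le ω)
  have hhit : ∀ ω ∈ {ω | ∃ k, k < T ∧ 1 ≤ B k ω}, 1 ≤ stoppedValue B τ ω :=
    fun ω ⟨k, hkT, hk⟩ => stoppedValue_hittingBtwn_mem ⟨k, ⟨k.zero_le, hkT.le⟩, hk⟩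
  have hnonneg : 0 ≤ᵐ[μ] stoppedValue B τ := by
    filter_upwards [ae_all_iff.2 hNonneg] with ω hω using hω _
  have hB0_mean : ∫ ω, B 0 ω ∂μ ≤ γ := by
    simpa using integral_mono_ae (hInt 0) (integrable_const γ) hB0
  calc μ {ω | ∃ k, k < T ∧ 1 ≤ B k ω}
      ≤ ENNReal.ofReal (∫ ω, stoppedValue B τ ω ∂μ) :=
        (integrable_stoppedValue ℕ hτ hInt hτT).measure_le_integral hnonneg hhit
    _ ≤ ENNReal.ofReal (γ + c * T) := by
        gcongr
        linarith [integral_stoppedValue_le_of_condExp_le_add hAdapted.stronglyAdapted hInt hc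
          hMart hτ hτT]

/-- Ville-type inequality for `c`-martingales: if `(B_k)` is a nonnegative integrable process
adapted to a filtration `(𝓕_k)` on a probability space, satisfying
`𝔼[B_{k+1} | 𝓕_k] ≤ B_k + c` a.s. for a constant `c ≥ 0`, and `B_0 ≤ γ` a.s. for some
`γ ∈ [0, 1)`, then for every `T`, `ℙ(∃ k < T, B_k ≥ 1) ≤ γ + c * T`. -/
theorem cMartingale_exit_prob_le {Ω : Type*} {m0 : MeasurableSpace Ω}
    (μ : Measure Ω) [IsProbabilityMeasure μ]
    (𝓕 : Filtration ℕ m0) (B : ℕ → Ω → ℝ)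
    (hAdapted : Adapted 𝓕 B)
    (hInt : ∀ k, Integrable (B k) μ)
    (hNonneg : ∀ k, ∀ᵐ ω ∂μ, 0 ≤ B k ω)
    (c : ℝ) (hc : 0 ≤ c)
    (hMart : ∀ k, μ[B (k + 1) | 𝓕 k] ≤ᵐ[μ] fun ω => B k ω + c)
    (γ : ℝ) (hγ0 : 0 ≤ γ) (hγ1 : γ < 1)
    (hB0 : ∀ᵐ ω ∂μ, B 0 ω ≤ γ)
    (T : ℕ) :
    μ {ω | ∃ k, k < T ∧ 1 ≤ B k ω} ≤ ENNReal.ofReal (γ + c * T) :=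
  cMartingale_exit_prob_le_general μ 𝓕 B hAdapted hInt hNonneg c hc hMart γ hB0 T
end

section
/- (Proposition 1.) Let (Ω, 𝓕, ℙ) be a probability space with a filtration (𝓕_k)_{k ∈ ℕ}, let (x_k)_{k ∈ ℕ} be a sequence of ℝ^n-valued random variables adapted to (𝓕_k), and let B : ℝ^n → ℝ be a measurable function with B(y) ≥ 0 for all y ∈ ℝ^n. Let C, D ⊆ ℝ^n be measurable sets and let γ ∈ [0, 1) and c ≥ 0 be constants such that: (i) B(y) ≤ γ for all y ∈ C; (ii) B(y) ≥ 1 for all y ∈ D; (iii) each B(x_k) is integrable and 𝔼[B(x_{k+1}) | 𝓕_k] ≤ B(x_k) + c almost surely for every k; and (iv) x_0 ∈ C almost surely. Then for every T ∈ ℕ, ℙ( there exists k with 0 ≤ k < T such that x_k ∈ D ) ≤ γ + c·T; equivalently, the trajectory remains outside the unsafe set D during the first T steps with probability at least 1 − γ − c·T. -/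
/-!
Along the trajectory, `Y k = B (x k)` increases in conditional mean by at most `c` per step, so
`Y k - c * k` is a supermartingale. Stop it at the first time `Y` reaches `1`, capped at `T`; this
happens whenever `x` enters `D` before `T`. Optional stopping gives `𝔼[Y_τ] ≤ 𝔼[Y 0] + c * T`,
Markov's inequality bounds the probability that `Y` reaches `1` by `𝔼[Y_τ]`, and `𝔼[Y 0] ≤ γ`
because `x 0 ∈ C` almost surely.
-/

open MeasureTheory

namespace MeasureTheory

variable {Ω : Type*} {m0 : MeasurableSpace Ω} {μ : Measure Ω} {𝓕 : Filtration ℕ m0}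
  {Y : ℕ → Ω → ℝ} {c : ℝ}

theorem supermartingale_sub_mul_of_condExp_succ_le_add [IsFiniteMeasure μ]
    (hY : StronglyAdapted 𝓕 Y) (hint : ∀ k, Integrable (Y k) μ)
    (hdrift : ∀ k, μ[Y (k + 1) | 𝓕 k] ≤ᵐ[μ] fun ω => Y k ω + c) :
    Supermartingale (fun k ω => Y k ω - c * k) 𝓕 μ := by
  refine supermartingale_nat (fun k => (hY k).sub stronglyMeasurable_const)
    (fun k => (hint k).sub (integrable_const _)) fun k => ?_
  filter_upwards [condExp_sub (hint (k + 1)) (integrable_const (c * (k + 1 : ℕ))) (𝓕 k),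
    hdrift k] with ω hsub hω
  change μ[Y (k + 1) - fun _ => c * (k + 1 : ℕ) | 𝓕 k] ω ≤ _
  rw [hsub, Pi.sub_apply, condExp_const (𝓕.le k)]
  push_cast
  linarith

theorem integral_stoppedValue_le_of_condExp_succ_le_add [IsProbabilityMeasure μ]
    (hY : StronglyAdapted 𝓕 Y) (hint : ∀ k, Integrable (Y k) μ)
    (hdrift : ∀ k, μ[Y (k + 1) | 𝓕 k] ≤ᵐ[μ] fun ω => Y k ω + c)
    (hc : 0 ≤ c) {τ : Ω → ℕ∞} (hτ : IsStoppingTime 𝓕 τ) {N : ℕ} (hτN : ∀ ω, τ ω ≤ N) :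
    ∫ ω, stoppedValue Y τ ω ∂μ ≤ ∫ ω, Y 0 ω ∂μ + c * N := by
  set M : ℕ → Ω → ℝ := fun k ω => Y k ω - c * k
  have hM := supermartingale_sub_mul_of_condExp_succ_le_add hY hint hdrift
  have hstop : ∫ ω, stoppedValue M τ ω ∂μ ≤ ∫ ω, M 0 ω ∂μ := by
    have := hM.neg.expected_stoppedValue_mono (isStoppingTime_const 𝓕 0) hτ (fun _ => zero_le) hτN
    change ∫ ω, -M 0 ω ∂μ ≤ ∫ ω, -stoppedValue M τ ω ∂μ at this
    rwa [integral_neg, integral_neg, neg_le_neg_iff] at this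
  have hle : ∀ ω, stoppedValue Y τ ω ≤ stoppedValue M τ ω + c * N := by
    intro ω
    have hτω : ((τ ω).untopA : ℝ) ≤ N := by exact_mod_cast WithTop.untopA_le (hτN ω)
    have := mul_le_mul_of_nonneg_left hτω hc
    simp only [stoppedValue, M]
    linarith
  have hMint : Integrable (stoppedValue M τ) μ := integrable_stoppedValue ℕ hτ hM.integrable hτN
  calc ∫ ω, stoppedValue Y τ ω ∂μ ≤ ∫ ω, stoppedValue M τ ω + c * N ∂μ :=
        integral_mono (integrable_stoppedValue ℕ hτ hint hτN) (hMint.add (integrable_const _)) hle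
    _ = ∫ ω, stoppedValue M τ ω ∂μ + c * N := by simp [integral_add hMint (integrable_const _)]
    _ ≤ ∫ ω, Y 0 ω ∂μ + c * N := by simpa [M] using hstop

theorem measure_exists_one_le_le_of_condExp_succ_le_add [IsProbabilityMeasure μ]
    (hY : StronglyAdapted 𝓕 Y) (hnonneg : 0 ≤ Y) (hint : ∀ k, Integrable (Y k) μ)
    (hdrift : ∀ k, μ[Y (k + 1) | 𝓕 k] ≤ᵐ[μ] fun ω => Y k ω + c) (hc : 0 ≤ c) (N : ℕ) :
    μ {ω | ∃ k ≤ N, 1 ≤ Y k ω} ≤ ENNReal.ofReal (∫ ω, Y 0 ω ∂μ + c * N) := by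
  set τ : Ω → ℕ∞ := fun ω => (hittingBtwn Y (Set.Ici 1) 0 N ω : ℕ)
  have hτ : IsStoppingTime 𝓕 τ := hY.adapted.isStoppingTime_hittingBtwn measurableSet_Ici
  have hτN : ∀ ω, τ ω ≤ N := fun ω => Nat.cast_le.mpr (hittingBtwn_le ω)
  have hhit : {ω | ∃ k ≤ N, 1 ≤ Y k ω} ⊆ {ω | 1 ≤ stoppedValue Y τ ω} :=
    fun ω ⟨k, hk, hYk⟩ => stoppedValue_hittingBtwn_mem ⟨k, ⟨zero_le, hk⟩, hYk⟩
  have hmarkov := mul_meas_ge_le_integral_of_nonneg (ae_of_all _ fun ω => hnonneg _ ω)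
    (integrable_stoppedValue ℕ hτ hint hτN) 1
  calc μ {ω | ∃ k ≤ N, 1 ≤ Y k ω} ≤ μ {ω | 1 ≤ stoppedValue Y τ ω} := measure_mono hhit
    _ = ENNReal.ofReal (μ.real {ω | 1 ≤ stoppedValue Y τ ω}) :=
        (ofReal_measureReal (measure_ne_top _ _)).symm
    _ ≤ ENNReal.ofReal (∫ ω, stoppedValue Y τ ω ∂μ) :=
        ENNReal.ofReal_le_ofReal (by rwa [one_mul] at hmarkov)
    _ ≤ ENNReal.ofReal (∫ ω, Y 0 ω ∂μ + c * N) := ENNReal.ofReal_le_ofReal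
      (integral_stoppedValue_le_of_condExp_succ_le_add hY hint hdrift hc hτ hτN)

end MeasureTheory

theorem barrier_certificate_safety_general {Ω : Type*} {m0 : MeasurableSpace Ω}
    (μ : Measure Ω) [IsProbabilityMeasure μ] {n : ℕ}
    (𝓕 : Filtration ℕ m0) (x : ℕ → Ω → EuclideanSpace ℝ (Fin n))
    (hAdapted : Adapted 𝓕 x)
    (B : EuclideanSpace ℝ (Fin n) → ℝ)
    (hBmeas : Measurable B) (hBnonneg : ∀ y, 0 ≤ B y)
    (C D : Set (EuclideanSpace ℝ (Fin n)))
    (γ : ℝ) (c : ℝ) (hc : 0 ≤ c)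
    (hBC : ∀ y ∈ C, B y ≤ γ)
    (hBD : ∀ y ∈ D, 1 ≤ B y)
    (hInt : ∀ k, Integrable (fun ω => B (x k ω)) μ)
    (hMart : ∀ k, μ[fun ω => B (x (k + 1) ω) | 𝓕 k] ≤ᵐ[μ] fun ω => B (x k ω) + c)
    (hx0 : ∀ᵐ ω ∂μ, x 0 ω ∈ C)
    (T : ℕ) :
    μ {ω | ∃ k, k < T ∧ x k ω ∈ D} ≤ ENNReal.ofReal (γ + c * T) := by
  have hY : StronglyAdapted 𝓕 fun k ω => B (x k ω) :=
    Adapted.stronglyAdapted fun k => hBmeas.comp (hAdapted k)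
  have hB0 : ∫ ω, B (x 0 ω) ∂μ ≤ γ :=
    calc ∫ ω, B (x 0 ω) ∂μ ≤ ∫ _, γ ∂μ :=
          integral_mono_ae (hInt 0) (integrable_const γ) (hx0.mono fun ω hω => hBC _ hω)
      _ = γ := by simp
  calc μ {ω | ∃ k, k < T ∧ x k ω ∈ D} ≤ μ {ω | ∃ k ≤ T, 1 ≤ B (x k ω)} :=
        measure_mono fun ω ⟨k, hk, hkD⟩ => ⟨k, hk.le, hBD _ hkD⟩
    _ ≤ ENNReal.ofReal (∫ ω, B (x 0 ω) ∂μ + c * T) :=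
        measure_exists_one_le_le_of_condExp_succ_le_add hY (fun _ _ => hBnonneg _) hInt hMart hc T
    _ ≤ ENNReal.ofReal (γ + c * T) := by gcongr

/-- **Proposition 1.** Let `(x_k)` be an `ℝ^n`-valued process adapted to a filtration `(𝓕_k)`
on a probability space, `B : ℝ^n → ℝ` a nonnegative measurable barrier function, `C` the safe set
and `D` the unsafe set (measurable), `γ ∈ [0,1)` and `c ≥ 0` constants such that
(i) `B ≤ γ` on `C`, (ii) `B ≥ 1` on `D`, (iii) each `B(x_k)` is integrable and
`𝔼[B(x_{k+1}) | 𝓕_k] ≤ B(x_k) + c` a.s., and (iv) `x_0 ∈ C` a.s.  Then for every `T`,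
`ℙ(∃ k < T, x_k ∈ D) ≤ γ + c * T`. -/
theorem barrier_certificate_safety {Ω : Type*} {m0 : MeasurableSpace Ω}
    (μ : Measure Ω) [IsProbabilityMeasure μ] {n : ℕ}
    (𝓕 : Filtration ℕ m0) (x : ℕ → Ω → EuclideanSpace ℝ (Fin n))
    (hAdapted : Adapted 𝓕 x)
    (B : EuclideanSpace ℝ (Fin n) → ℝ)
    (hBmeas : Measurable B) (hBnonneg : ∀ y, 0 ≤ B y)
    (C D : Set (EuclideanSpace ℝ (Fin n)))
    (hCmeas : MeasurableSet C) (hDmeas : MeasurableSet D)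
    (γ : ℝ) (hγ0 : 0 ≤ γ) (hγ1 : γ < 1) (c : ℝ) (hc : 0 ≤ c)
    (hBC : ∀ y ∈ C, B y ≤ γ)
    (hBD : ∀ y ∈ D, 1 ≤ B y)
    (hInt : ∀ k, Integrable (fun ω => B (x k ω)) μ)
    (hMart : ∀ k, μ[fun ω => B (x (k + 1) ω) | 𝓕 k] ≤ᵐ[μ] fun ω => B (x k ω) + c)
    (hx0 : ∀ᵐ ω ∂μ, x 0 ω ∈ C)
    (T : ℕ) :
    μ {ω | ∃ k, k < T ∧ x k ω ∈ D} ≤ ENNReal.ofReal (γ + c * T) :=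
  barrier_certificate_safety_general μ 𝓕 x hAdapted B hBmeas hBnonneg C D γ c hc hBC hBD hInt hMart
    hx0 T
end
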